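/- arXiv:1901.06634 — 7 statements merged into one kernel-verified Lean document; each statement's English description precedes it below -/
import Mathlib

section
/- If u : [a,b] → ℝ is convex and v : [a,b] → ℝ is nonnegative, integrable and symmetric about (a+b)/2 (i.e. v(a+b-x) = v(x)), then u((a+b)/2) ∫_a^b v(y) dy ≤ ∫_a^b u(y)v(y) dy ≤ ((u(a)+u(b))/2) ∫_a^b v(y) dy. -/
/-!
Averaging `u` with its reflection `y ↦ u (a + b - y)` does not change `∫ u v`, because `v` is
symmetric. The average is squeezed pointwise between `u ((a + b) / 2)` (midpoint convexity) and
`(u a + u b) / 2` (convexity along `[a, b]`, applied at `y` and at `a + b - y`); integrating these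
bounds against `v ≥ 0` gives both inequalities.
-/

open MeasureTheory Set intervalIntegral

theorem convexOn_of_forall_mul_add_one_sub_mul_le {s : Set ℝ} {f : ℝ → ℝ} (hs : Convex ℝ s)
    (hf : ∀ x ∈ s, ∀ y ∈ s, ∀ μ ∈ Icc (0 : ℝ) 1,
      f (μ * x + (1 - μ) * y) ≤ μ * f x + (1 - μ) * f y) :
    ConvexOn ℝ s f := by
  refine ⟨hs, fun x hx y hy μ ν hμ hν hμν => ?_⟩
  obtain rfl : ν = 1 - μ := by linarith
  exact hf x hx y hy μ ⟨hμ, by linarith⟩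

theorem reflect_mem_Icc {a b x : ℝ} (hx : x ∈ Icc a b) : a + b - x ∈ Icc a b :=
  ⟨by linarith [hx.2], by linarith [hx.1]⟩

namespace ConvexOn

variable {s : Set ℝ} {f : ℝ → ℝ} {a b x y : ℝ}

theorem map_add_div_two_le (hf : ConvexOn ℝ s f) (hx : x ∈ s) (hy : y ∈ s) :
    f ((x + y) / 2) ≤ (f x + f y) / 2 := by
  have h := hf.2 hx hy (by norm_num : (0 : ℝ) ≤ 1 / 2) (by norm_num : (0 : ℝ) ≤ 1 / 2)
    (by norm_num)
  simp only [smul_eq_mul] at h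
  calc f ((x + y) / 2) = f (1 / 2 * x + 1 / 2 * y) := by ring_nf
    _ ≤ 1 / 2 * f x + 1 / 2 * f y := h
    _ = (f x + f y) / 2 := by ring

theorem map_add_map_reflect_le (hf : ConvexOn ℝ (Icc a b) f) (hx : x ∈ Icc a b) :
    f x + f (a + b - x) ≤ f a + f b := by
  have hab : a ≤ b := hx.1.trans hx.2
  obtain ⟨μ, ν, hμ, hν, hμν, rfl⟩ := (Convex.mem_Icc hab).1 hx
  have ha : a ∈ Icc a b := left_mem_Icc.2 hab
  have hb : b ∈ Icc a b := right_mem_Icc.2 hab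
  have h₁ := hf.2 ha hb hμ hν hμν
  have h₂ := hf.2 ha hb hν hμ (by linarith)
  have hreflect : a + b - (μ * a + ν * b) = ν * a + μ * b := by
    linear_combination -(a + b) * hμν
  simp only [smul_eq_mul] at h₁ h₂
  rw [hreflect]
  linear_combination h₁ + h₂ + (f a + f b) * hμν

end ConvexOn

namespace intervalIntegral

variable {E : Type*} [NormedAddCommGroup E] [NormedSpace ℝ E] {a b : ℝ}

theorem integral_comp_reflect (f : ℝ → E) :
    ∫ x in a..b, f (a + b - x) = ∫ x in a..b, f x := by
  simpa only [add_sub_cancel_right, add_sub_cancel_left] using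
    integral_comp_sub_left (a := a) (b := b) f (a + b)

end intervalIntegral

theorem IntervalIntegrable.comp_reflect {E : Type*} [NormedAddCommGroup E] {f : ℝ → E}
    {a b : ℝ} (hf : IntervalIntegrable f volume a b) :
    IntervalIntegrable (fun x => f (a + b - x)) volume a b := by
  simpa only [add_sub_cancel_right, add_sub_cancel_left] using (hf.comp_sub_left (a + b)).symm

section Symmetrization

variable {a b : ℝ} {u v : ℝ → ℝ}

theorem eqOn_reflect_mul_of_symmetric (hab : a ≤ b)
    (hvsym : ∀ x ∈ Icc a b, v (a + b - x) = v x) :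
    EqOn (fun y => u (a + b - y) * v (a + b - y)) (fun y => u (a + b - y) * v y)
      (uIcc a b) := fun y hy => by
  rw [uIcc_of_le hab] at hy
  simp only [hvsym y hy]

theorem intervalIntegrable_reflect_mul_of_symmetric (hab : a ≤ b)
    (hvsym : ∀ x ∈ Icc a b, v (a + b - x) = v x)
    (huv : IntervalIntegrable (fun y => u y * v y) volume a b) :
    IntervalIntegrable (fun y => u (a + b - y) * v y) volume a b :=
  huv.comp_reflect.congr fun _ hy => eqOn_reflect_mul_of_symmetric hab hvsym (uIoc_subset_uIcc hy)

theorem integral_reflect_mul_of_symmetric (hab : a ≤ b)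
    (hvsym : ∀ x ∈ Icc a b, v (a + b - x) = v x) :
    ∫ y in a..b, u (a + b - y) * v y = ∫ y in a..b, u y * v y := by
  rw [← integral_congr (eqOn_reflect_mul_of_symmetric hab hvsym),
    integral_comp_reflect fun y => u y * v y]

theorem intervalIntegrable_symmetrize_mul (hab : a ≤ b)
    (hvsym : ∀ x ∈ Icc a b, v (a + b - x) = v x)
    (huv : IntervalIntegrable (fun y => u y * v y) volume a b) :
    IntervalIntegrable (fun y => (u y + u (a + b - y)) / 2 * v y) volume a b :=
  ((huv.add (intervalIntegrable_reflect_mul_of_symmetric hab hvsym huv)).div_const 2).congr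
    fun y _ => by ring

theorem integral_mul_eq_integral_symmetrize_mul (hab : a ≤ b)
    (hvsym : ∀ x ∈ Icc a b, v (a + b - x) = v x)
    (huv : IntervalIntegrable (fun y => u y * v y) volume a b) :
    ∫ y in a..b, u y * v y = ∫ y in a..b, (u y + u (a + b - y)) / 2 * v y := by
  calc ∫ y in a..b, u y * v y
      = ((∫ y in a..b, u y * v y) + ∫ y in a..b, u (a + b - y) * v y) / 2 := by
        rw [integral_reflect_mul_of_symmetric hab hvsym]; ring
    _ = ∫ y in a..b, (u y * v y + u (a + b - y) * v y) / 2 := by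
        rw [intervalIntegral.integral_div, integral_add huv
          (intervalIntegrable_reflect_mul_of_symmetric hab hvsym huv)]
    _ = ∫ y in a..b, (u y + u (a + b - y)) / 2 * v y := by
        congr 1; ext y; ring

end Symmetrization

theorem hermite_hadamard_fejer_general
    (a b : ℝ) (hab : a < b) (u v : ℝ → ℝ)
    (hconv : ∀ x ∈ Set.Icc a b, ∀ y ∈ Set.Icc a b, ∀ μ ∈ Set.Icc (0:ℝ) 1,
      u (μ * x + (1 - μ) * y) ≤ μ * u x + (1 - μ) * u y)
    (hv : IntervalIntegrable v volume a b)
    (hvnonneg : ∀ x ∈ Set.Icc a b, 0 ≤ v x)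
    (hvsym : ∀ x ∈ Set.Icc a b, v (a + b - x) = v x)
    (huv : IntervalIntegrable (fun y => u y * v y) volume a b) :
    u ((a + b) / 2) * (∫ y in a..b, v y) ≤ (∫ y in a..b, u y * v y) ∧
      (∫ y in a..b, u y * v y) ≤ ((u a + u b) / 2) * ∫ y in a..b, v y := by
  have hu : ConvexOn ℝ (Icc a b) u := convexOn_of_forall_mul_add_one_sub_mul_le (convex_Icc a b) hconv
  have hsym := intervalIntegrable_symmetrize_mul hab.le hvsym huv
  rw [integral_mul_eq_integral_symmetrize_mul hab.le hvsym huv,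
    ← intervalIntegral.integral_const_mul, ← intervalIntegral.integral_const_mul]
  refine ⟨integral_mono_on hab.le (hv.const_mul _) hsym fun y hy => ?_,
    integral_mono_on hab.le hsym (hv.const_mul _) fun y hy => ?_⟩
  · refine mul_le_mul_of_nonneg_right ?_ (hvnonneg y hy)
    have hmid := hu.map_add_div_two_le hy (reflect_mem_Icc hy)
    rwa [add_sub_cancel] at hmid
  · refine mul_le_mul_of_nonneg_right ?_ (hvnonneg y hy)
    linarith [hu.map_add_map_reflect_le hy]

theorem hermite_hadamard_fejer
    (a b : ℝ) (hab : a < b) (u v : ℝ → ℝ)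
    (hconv : ∀ x ∈ Set.Icc a b, ∀ y ∈ Set.Icc a b, ∀ μ ∈ Set.Icc (0:ℝ) 1,
      u (μ * x + (1 - μ) * y) ≤ μ * u x + (1 - μ) * u y)
    (hu : IntervalIntegrable u volume a b)
    (hv : IntervalIntegrable v volume a b)
    (hvnonneg : ∀ x ∈ Set.Icc a b, 0 ≤ v x)
    (hvsym : ∀ x ∈ Set.Icc a b, v (a + b - x) = v x)
    (huv : IntervalIntegrable (fun y => u y * v y) volume a b) :
    u ((a + b) / 2) * (∫ y in a..b, v y) ≤ (∫ y in a..b, u y * v y) ∧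
      (∫ y in a..b, u y * v y) ≤ ((u a + u b) / 2) * ∫ y in a..b, v y :=
  hermite_hadamard_fejer_general a b hab u v hconv hv hvnonneg hvsym huv
end

section
/- Let u : [a,b] → ℝ be convex and integrable with a < b, let α ∈ (0,1), and set ρ = ((1-α)/α)(b-a). Then u((a+b)/2) ≤ ((1-α)/(2(1-exp(-ρ)))) [𝓘^α_{a+}u(b) + 𝓘^α_{b-}u(a)] ≤ (u(a)+u(b))/2, where 𝓘^α_{a+}u(b) = (1/α) ∫_a^b exp(-((1-α)/α)(b-s)) u(s) ds and 𝓘^α_{b-}u(a) = (1/α) ∫_a^b exp(-((1-α)/α)(s-a)) u(s) ds. -/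
open Real MeasureTheory

theorem fractional_hermite_hadamard_exp
    (a b : ℝ) (hab : a < b) (u : ℝ → ℝ) (α : ℝ) (hα : α ∈ Set.Ioo (0:ℝ) 1)
    (hconv : ∀ x ∈ Set.Icc a b, ∀ y ∈ Set.Icc a b, ∀ μ ∈ Set.Icc (0:ℝ) 1,
      u (μ * x + (1 - μ) * y) ≤ μ * u x + (1 - μ) * u y)
    (hu : IntervalIntegrable u volume a b) :
    u ((a + b) / 2) ≤
        ((1 - α) / (2 * (1 - Real.exp (-(((1 - α) / α) * (b - a)))))) *
          ((1 / α) * (∫ s in a..b, Real.exp (-(((1 - α) / α) * (b - s))) * u s) +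
            (1 / α) * ∫ s in a..b, Real.exp (-(((1 - α) / α) * (s - a))) * u s) ∧
      ((1 - α) / (2 * (1 - Real.exp (-(((1 - α) / α) * (b - a)))))) *
          ((1 / α) * (∫ s in a..b, Real.exp (-(((1 - α) / α) * (b - s))) * u s) +
            (1 / α) * ∫ s in a..b, Real.exp (-(((1 - α) / α) * (s - a))) * u s) ≤
        (u a + u b) / 2 := by
  obtain ⟨hα0, hα1⟩ := hα
  set l : ℝ := (1 - α) / α with hl
  have hlpos : 0 < l := div_pos (by linarith) hα0
  set E : ℝ := Real.exp (-(l * (b - a))) with hE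
  have hE1 : E < 1 := by
    rw [hE, Real.exp_lt_one_iff]
    nlinarith [mul_pos hlpos (sub_pos.mpr hab)]
  have hEne : (1 : ℝ) - E ≠ 0 := by linarith
  have hαne : α ≠ 0 := ne_of_gt hα0
  have hlne : l ≠ 0 := ne_of_gt hlpos
  set w : ℝ → ℝ := fun s => Real.exp (-(l * (b - s))) + Real.exp (-(l * (s - a))) with hw
  have hwc : Continuous w := by fun_prop
  have hwnn : ∀ s, 0 ≤ w s := fun s =>
    add_nonneg (Real.exp_nonneg _) (Real.exp_nonneg _)
  have hwsym : ∀ s, w (a + b - s) = w s := by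
    intro s
    simp only [hw]
    rw [show b - (a + b - s) = s - a by ring, show a + b - s - a = b - s by ring, add_comm]
  -- integrability facts
  have hint1 : IntervalIntegrable (fun s => Real.exp (-(l * (b - s))) * u s) volume a b :=
    hu.continuousOn_mul (Continuous.continuousOn (by fun_prop))
  have hint2 : IntervalIntegrable (fun s => Real.exp (-(l * (s - a))) * u s) volume a b :=
    hu.continuousOn_mul (Continuous.continuousOn (by fun_prop))
  have huw : IntervalIntegrable (fun s => w s * u s) volume a b :=
    hu.continuousOn_mul hwc.continuousOn
  have hur : IntervalIntegrable (fun s => u (a + b - s)) volume a b := by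
    have h := (hu.symm.comp_sub_left (a + b))
    simpa using h
  have huwr : IntervalIntegrable (fun s => w s * u (a + b - s)) volume a b :=
    hur.continuousOn_mul hwc.continuousOn
  -- compute the weight integrals
  have hW1 : (∫ s in a..b, Real.exp (-(l * (b - s)))) = (1 - E) / l := by
    have h1 : ∀ s : ℝ, -(l * (b - s)) = l * s + (-(l * b)) := fun s => by ring
    simp_rw [h1]
    rw [intervalIntegral.integral_comp_mul_add Real.exp hlne (-(l * b)), integral_exp]
    rw [show l * b + -(l * b) = 0 by ring, show l * a + -(l * b) = -(l * (b - a)) by ring,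
      Real.exp_zero, ← hE, smul_eq_mul, div_eq_inv_mul]
  have hW2 : (∫ s in a..b, Real.exp (-(l * (s - a)))) = (1 - E) / l := by
    have h1 : ∀ s : ℝ, -(l * (s - a)) = (-l) * s + l * a := fun s => by ring
    simp_rw [h1]
    rw [intervalIntegral.integral_comp_mul_add Real.exp (neg_ne_zero.mpr hlne) (l * a),
      integral_exp]
    rw [show (-l) * a + l * a = 0 by ring, show (-l) * b + l * a = -(l * (b - a)) by ring,
      Real.exp_zero, ← hE, smul_eq_mul, div_eq_inv_mul, inv_neg]
    ring
  have hW : (∫ s in a..b, w s) = 2 * (1 - E) / l := by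
    have : (∫ s in a..b, w s)
        = (∫ s in a..b, Real.exp (-(l * (b - s)))) + ∫ s in a..b, Real.exp (-(l * (s - a))) := by
      exact intervalIntegral.integral_add
        ((Continuous.intervalIntegrable (by fun_prop) a b))
        ((Continuous.intervalIntegrable (by fun_prop) a b))
    rw [this, hW1, hW2]; ring
  -- reflection identity
  have hJr : (∫ s in a..b, w s * u (a + b - s)) = ∫ s in a..b, w s * u s := by
    have h := intervalIntegral.integral_comp_sub_left (a := a) (b := b)
      (fun t => w (a + b - t) * u t) (a + b)
    have hL : (∫ x in a..b, w (a + b - (a + b - x)) * u (a + b - x))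
        = ∫ s in a..b, w s * u (a + b - s) := by
      apply intervalIntegral.integral_congr
      intro x _
      dsimp only
      rw [show a + b - (a + b - x) = x by ring]
    have hR : (∫ x in a + b - b..a + b - a, w (a + b - x) * u x)
        = ∫ s in a..b, w s * u s := by
      rw [show a + b - b = a by ring, show a + b - a = b by ring]
      apply intervalIntegral.integral_congr
      intro x _
      dsimp only
      rw [hwsym]
    rw [hL, hR] at h
    exact h
  set J : ℝ := ∫ s in a..b, w s * u s with hJdef
  set m : ℝ := (a + b) / 2 with hm
  -- left-hand inequality (scaled)
  have hmemrefl : ∀ s ∈ Set.Icc a b, a + b - s ∈ Set.Icc a b := by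
    intro s hs
    exact ⟨by linarith [hs.2], by linarith [hs.1]⟩
  have hleft : u m * (2 * (1 - E) / l) ≤ J := by
    have hmono : (∫ s in a..b, w s * (2 * u m))
        ≤ ∫ s in a..b, (w s * u s + w s * u (a + b - s)) := by
      apply intervalIntegral.integral_mono_on hab.le
        (Continuous.intervalIntegrable (by fun_prop) a b) (huw.add huwr)
      intro s hs
      have hc := hconv s hs (a + b - s) (hmemrefl s hs) (1/2) (by norm_num)
      rw [show (1/2 : ℝ) * s + (1 - 1/2) * (a + b - s) = m by rw [hm]; ring] at hc
      nlinarith [hwnn s]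
    have hLv : (∫ s in a..b, w s * (2 * u m)) = (2 * u m) * (2 * (1 - E) / l) := by
      have : (∫ s in a..b, w s * (2 * u m)) = ∫ s in a..b, (2 * u m) * w s := by
        apply intervalIntegral.integral_congr; intro x _; ring
      rw [this, intervalIntegral.integral_const_mul, hW]
    have hRv : (∫ s in a..b, (w s * u s + w s * u (a + b - s))) = 2 * J := by
      rw [intervalIntegral.integral_add huw huwr, hJr, hJdef]; ring
    rw [hLv, hRv] at hmono
    linarith
  -- right-hand inequality (scaled)
  have hright : J ≤ (u a + u b) / 2 * (2 * (1 - E) / l) := by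
    have hmono : (∫ s in a..b, (w s * u s + w s * u (a + b - s)))
        ≤ ∫ s in a..b, w s * (u a + u b) := by
      apply intervalIntegral.integral_mono_on hab.le (huw.add huwr)
        (Continuous.intervalIntegrable (by fun_prop) a b)
      intro s hs
      have hba : (0:ℝ) < b - a := sub_pos.mpr hab
      have hμmem : (b - s) / (b - a) ∈ Set.Icc (0:ℝ) 1 :=
        ⟨div_nonneg (by linarith [hs.2]) hba.le, by rw [div_le_one hba]; linarith [hs.1]⟩
      have hμmem' : (s - a) / (b - a) ∈ Set.Icc (0:ℝ) 1 :=
        ⟨div_nonneg (by linarith [hs.1]) hba.le, by rw [div_le_one hba]; linarith [hs.2]⟩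
      have h1 := hconv a (Set.left_mem_Icc.mpr hab.le) b (Set.right_mem_Icc.mpr hab.le)
        ((b - s) / (b - a)) hμmem
      have h2 := hconv a (Set.left_mem_Icc.mpr hab.le) b (Set.right_mem_Icc.mpr hab.le)
        ((s - a) / (b - a)) hμmem'
      rw [show (b - s) / (b - a) * a + (1 - (b - s) / (b - a)) * b = s by
        field_simp; ring] at h1
      rw [show (s - a) / (b - a) * a + (1 - (s - a) / (b - a)) * b = a + b - s by
        field_simp; ring] at h2
      have hsum : u s + u (a + b - s) ≤ u a + u b := by
        calc u s + u (a + b - s)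
            ≤ ((b - s) / (b - a) * u a + (1 - (b - s) / (b - a)) * u b)
              + ((s - a) / (b - a) * u a + (1 - (s - a) / (b - a)) * u b) :=
              add_le_add h1 h2
          _ = u a + u b := by field_simp; ring
      nlinarith [hwnn s]
    have hLv : (∫ s in a..b, (w s * u s + w s * u (a + b - s))) = 2 * J := by
      rw [intervalIntegral.integral_add huw huwr, hJr, hJdef]; ring
    have hRv : (∫ s in a..b, w s * (u a + u b)) = (u a + u b) * (2 * (1 - E) / l) := by
      have : (∫ s in a..b, w s * (u a + u b)) = ∫ s in a..b, (u a + u b) * w s := by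
        apply intervalIntegral.integral_congr; intro x _; ring
      rw [this, intervalIntegral.integral_const_mul, hW]
    rw [hLv, hRv] at hmono
    linarith
  -- identify the middle expression with J * l / (2 * (1 - E))
  have hJsplit : (1 / α) * (∫ s in a..b, Real.exp (-(l * (b - s))) * u s)
      + (1 / α) * (∫ s in a..b, Real.exp (-(l * (s - a))) * u s) = (1 / α) * J := by
    rw [hJdef]
    have : (∫ s in a..b, w s * u s)
        = (∫ s in a..b, Real.exp (-(l * (b - s))) * u s)
          + ∫ s in a..b, Real.exp (-(l * (s - a))) * u s := by
      rw [← intervalIntegral.integral_add hint1 hint2]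
      apply intervalIntegral.integral_congr
      intro x _
      simp only [hw]; ring
    rw [this]; ring
  have hMid : ((1 - α) / (2 * (1 - E))) *
      ((1 / α) * (∫ s in a..b, Real.exp (-(l * (b - s))) * u s)
        + (1 / α) * (∫ s in a..b, Real.exp (-(l * (s - a))) * u s))
      = J * l / (2 * (1 - E)) := by
    rw [hJsplit, hl]
    field_simp
  have hWpos : 0 < 2 * (1 - E) / l := div_pos (by linarith) hlpos
  refine ⟨?_, ?_⟩
  · rw [hMid, ← div_div_eq_mul_div, le_div_iff₀ hWpos]
    exact hleft
  · rw [hMid, ← div_div_eq_mul_div, div_le_iff₀ hWpos]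
    exact hright
end

section
/- Let u : [a,b] → ℝ be convex and integrable with a < b, α ∈ (0,1), and let w : [a,b] → ℝ be nonnegative, integrable and symmetric about (a+b)/2. Then u((a+b)/2)[𝓘^α_{a+}w(b) + 𝓘^α_{b-}w(a)] ≤ 𝓘^α_{a+}(uw)(b) + 𝓘^α_{b-}(uw)(a) ≤ ((u(a)+u(b))/2)[𝓘^α_{a+}w(b) + 𝓘^α_{b-}w(a)]. -/
/-! The two exponential kernels are reflections of each other under `s ↦ a + b - s`, so their sum
`k` is symmetric about `(a + b) / 2`, and the claim is the classical Hermite–Hadamard–Fejér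
inequality for the symmetric nonnegative weight `k * w`, scaled by `1 / α > 0`. That inequality
follows by integrating `2 f((a + b) / 2) ≤ f x + f (a + b - x) ≤ f a + f b` against the weight
and using that `x ↦ a + b - x` preserves the weighted integral of `f`. -/

open Real MeasureTheory Set

theorem add_sub_mem_Icc {α : Type*} [AddCommGroup α] [PartialOrder α] [IsOrderedAddMonoid α]
    {a b x : α} (hx : x ∈ Icc a b) : a + b - x ∈ Icc a b :=
  ⟨le_sub_iff_add_le.2 (add_comm a x ▸ add_le_add_right hx.2 a),
    sub_le_iff_le_add.2 (add_comm b a ▸ add_le_add_right hx.1 b)⟩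

section Fejer

variable {a b : ℝ} {f p : ℝ → ℝ}

theorem ConvexOn.two_mul_map_midpoint_le (hf : ConvexOn ℝ (Icc a b) f) {x : ℝ}
    (hx : x ∈ Icc a b) : 2 * f ((a + b) / 2) ≤ f x + f (a + b - x) := by
  have h := hf.2 hx (add_sub_mem_Icc hx) (by norm_num : (0 : ℝ) ≤ 1 / 2)
    (by norm_num : (0 : ℝ) ≤ 1 / 2) (by norm_num)
  simp only [smul_eq_mul] at h
  rw [show 1 / 2 * x + 1 / 2 * (a + b - x) = (a + b) / 2 by ring] at h
  linarith

theorem ConvexOn.add_map_reflect_le (hf : ConvexOn ℝ (Icc a b) f) {x : ℝ} (hx : x ∈ Icc a b) :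
    f x + f (a + b - x) ≤ f a + f b := by
  have hab : a ≤ b := hx.1.trans hx.2
  rw [← segment_eq_Icc hab] at hx
  obtain ⟨θ, φ, hθ, hφ, hθφ, rfl⟩ := hx
  have hreflect : a + b - (θ • a + φ • b) = φ • a + θ • b := by
    simp only [smul_eq_mul]; linear_combination -(a + b) * hθφ
  have ha : a ∈ Icc a b := left_mem_Icc.2 hab
  have hb : b ∈ Icc a b := right_mem_Icc.2 hab
  rw [hreflect]
  have h₁ := hf.2 ha hb hθ hφ hθφ
  have h₂ := hf.2 ha hb hφ hθ (by linarith)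
  simp only [smul_eq_mul] at h₁ h₂
  linear_combination h₁ + h₂ + (f a + f b) * hθφ

theorem ConvexOn.exists_abs_le_of_Icc (hf : ConvexOn ℝ (Icc a b) f) :
    ∃ C, ∀ x ∈ Icc a b, |f x| ≤ C := by
  refine ⟨|max (f a) (f b)| + 2 * |f ((a + b) / 2)|, fun x hx => abs_le.2 ?_⟩
  have hab : a ≤ b := hx.1.trans hx.2
  have ha : a ∈ Icc a b := left_mem_Icc.2 hab
  have hb : b ∈ Icc a b := right_mem_Icc.2 hab
  have hmid := hf.two_mul_map_midpoint_le hx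
  have hle := hf.le_max_of_mem_Icc ha hb hx
  have hle' := hf.le_max_of_mem_Icc ha hb (add_sub_mem_Icc hx)
  constructor <;> linarith [le_abs_self (max (f a) (f b)), abs_le.1 (le_refl |f ((a + b) / 2)|)]

theorem ConvexOn.intervalIntegrable_mul (hab : a ≤ b) (hf : ConvexOn ℝ (Icc a b) f)
    (hfi : IntervalIntegrable f volume a b) (hp : IntervalIntegrable p volume a b) :
    IntervalIntegrable (fun x => f x * p x) volume a b := by
  rw [intervalIntegrable_iff_integrableOn_Ioc_of_le hab] at hfi hp ⊢
  obtain ⟨C, hC⟩ := hf.exists_abs_le_of_Icc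
  refine hp.bdd_mul (c := C) hfi.aestronglyMeasurable ?_
  filter_upwards [ae_restrict_mem measurableSet_Ioc] with x hx
  exact hC x (Ioc_subset_Icc_self hx)

theorem IntervalIntegrable.comp_reflect_mul (hab : a ≤ b)
    (hpsymm : ∀ x ∈ Icc a b, p (a + b - x) = p x)
    (hfp : IntervalIntegrable (fun x => f x * p x) volume a b) :
    IntervalIntegrable (fun x => f (a + b - x) * p x) volume a b := by
  have h := (hfp.comp_sub_left (a + b)).symm
  rw [add_sub_cancel_left, add_sub_cancel_right] at h
  refine h.congr fun x hx => ?_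
  rw [uIoc_of_le hab] at hx
  simp only [hpsymm x (Ioc_subset_Icc_self hx)]

theorem intervalIntegral.integral_comp_reflect_mul (hab : a ≤ b)
    (hpsymm : ∀ x ∈ Icc a b, p (a + b - x) = p x) :
    ∫ x in a..b, f (a + b - x) * p x = ∫ x in a..b, f x * p x := by
  calc ∫ x in a..b, f (a + b - x) * p x
      = ∫ x in a..b, f (a + b - x) * p (a + b - x) :=
        intervalIntegral.integral_congr fun x hx => by
          rw [uIcc_of_le hab] at hx
          simp only [hpsymm x hx]
    _ = ∫ x in a..b, f x * p x := by
        rw [intervalIntegral.integral_comp_sub_left (fun x => f x * p x), add_sub_cancel_left,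
          add_sub_cancel_right]

theorem ConvexOn.hermite_hadamard_fejer (hab : a ≤ b) (hf : ConvexOn ℝ (Icc a b) f)
    (hp : IntervalIntegrable p volume a b)
    (hfp : IntervalIntegrable (fun x => f x * p x) volume a b)
    (hp_nonneg : ∀ x ∈ Icc a b, 0 ≤ p x) (hpsymm : ∀ x ∈ Icc a b, p (a + b - x) = p x) :
    f ((a + b) / 2) * (∫ x in a..b, p x) ≤ ∫ x in a..b, f x * p x ∧
      ∫ x in a..b, f x * p x ≤ (f a + f b) / 2 * ∫ x in a..b, p x := by
  have hreflect := hfp.comp_reflect_mul hab hpsymm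
  have hsum : ∫ x in a..b, (f x * p x + f (a + b - x) * p x) = 2 * ∫ x in a..b, f x * p x := by
    rw [intervalIntegral.integral_add hfp hreflect,
      intervalIntegral.integral_comp_reflect_mul hab hpsymm, two_mul]
  constructor
  · have h := intervalIntegral.integral_mono_on hab (hp.const_mul (2 * f ((a + b) / 2)))
      (hfp.add hreflect) fun x hx => by
        rw [← add_mul]
        exact mul_le_mul_of_nonneg_right (hf.two_mul_map_midpoint_le hx) (hp_nonneg x hx)
    rw [intervalIntegral.integral_const_mul, hsum] at h
    linarith
  · have h := intervalIntegral.integral_mono_on hab (hfp.add hreflect)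
      (hp.const_mul (f a + f b)) fun x hx => by
        rw [← add_mul]
        exact mul_le_mul_of_nonneg_right (hf.add_map_reflect_le hx) (hp_nonneg x hx)
    rw [intervalIntegral.integral_const_mul, hsum] at h
    linarith

end Fejer

theorem fractional_hermite_hadamard_fejer_exp
    (a b : ℝ) (hab : a < b) (u w : ℝ → ℝ) (α : ℝ) (hα : α ∈ Set.Ioo (0:ℝ) 1)
    (hconv : ∀ x ∈ Set.Icc a b, ∀ y ∈ Set.Icc a b, ∀ μ ∈ Set.Icc (0:ℝ) 1,
      u (μ * x + (1 - μ) * y) ≤ μ * u x + (1 - μ) * u y)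
    (hu : IntervalIntegrable u volume a b)
    (hw : IntervalIntegrable w volume a b)
    (hwnonneg : ∀ x ∈ Set.Icc a b, 0 ≤ w x)
    (hwsym : ∀ x ∈ Set.Icc a b, w (a + b - x) = w x) :
    u ((a + b) / 2) *
        ((1 / α) * (∫ s in a..b, Real.exp (-(((1 - α) / α) * (b - s))) * w s) +
          (1 / α) * ∫ s in a..b, Real.exp (-(((1 - α) / α) * (s - a))) * w s) ≤
      ((1 / α) * (∫ s in a..b, Real.exp (-(((1 - α) / α) * (b - s))) * (u s * w s)) +
        (1 / α) * ∫ s in a..b, Real.exp (-(((1 - α) / α) * (s - a))) * (u s * w s)) ∧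
      ((1 / α) * (∫ s in a..b, Real.exp (-(((1 - α) / α) * (b - s))) * (u s * w s)) +
        (1 / α) * ∫ s in a..b, Real.exp (-(((1 - α) / α) * (s - a))) * (u s * w s)) ≤
      ((u a + u b) / 2) *
        ((1 / α) * (∫ s in a..b, Real.exp (-(((1 - α) / α) * (b - s))) * w s) +
          (1 / α) * ∫ s in a..b, Real.exp (-(((1 - α) / α) * (s - a))) * w s) := by
  have hu_conv : ConvexOn ℝ (Icc a b) u := ⟨convex_Icc a b, fun x hx y hy μ ν hμ hν hμν => by
    obtain rfl : ν = 1 - μ := by linarith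
    simpa only [smul_eq_mul] using hconv x hx y hy μ ⟨hμ, by linarith⟩⟩
  set c := (1 - α) / α
  set k : ℝ → ℝ := fun s => exp (-(c * (b - s))) + exp (-(c * (s - a))) with hk
  have hk_cont : Continuous k := by fun_prop
  have hk_symm (s : ℝ) : k (a + b - s) = k s := by
    simp only [hk, show b - (a + b - s) = s - a by ring, show a + b - s - a = b - s by ring,
      add_comm]
  have hsplit (g : ℝ → ℝ) (hg : IntervalIntegrable g volume a b) :
      (1 / α) * (∫ s in a..b, exp (-(c * (b - s))) * g s) +
          (1 / α) * ∫ s in a..b, exp (-(c * (s - a))) * g s =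
        (1 / α) * ∫ s in a..b, k s * g s := by
    rw [← mul_add, ← intervalIntegral.integral_add (hg.continuousOn_mul (by fun_prop))
      (hg.continuousOn_mul (by fun_prop))]
    simp only [hk, add_mul]
  have huw := hu_conv.intervalIntegrable_mul hab.le hu hw
  obtain ⟨hlower, hupper⟩ := hu_conv.hermite_hadamard_fejer (p := fun s => k s * w s) hab.le
    (hw.continuousOn_mul hk_cont.continuousOn)
    (by simpa only [mul_left_comm] using huw.continuousOn_mul hk_cont.continuousOn)
    (fun s hs => mul_nonneg (by positivity) (hwnonneg s hs))
    (fun s hs => by simp only [hk_symm, hwsym s hs])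
  simp only [mul_left_comm (u _)] at hlower hupper
  have hα_inv : 0 ≤ 1 / α := one_div_nonneg.2 hα.1.le
  rw [hsplit w hw, hsplit _ huw, mul_left_comm _ (1 / α), mul_left_comm _ (1 / α)]
  exact ⟨mul_le_mul_of_nonneg_left hlower hα_inv, mul_le_mul_of_nonneg_left hupper hα_inv⟩
end

section
/- If f : I → ℝ is twice continuously differentiable on an open interval I and f''(x) - p²f(x) ≥ 0 for all x ∈ I, then f is hyperbolic p-convex on I, i.e. for every a < b in I and every x ∈ [a,b], f(x) ≤ (sinh[p(b-x)]/sinh[p(b-a)]) f(a) + (sinh[p(x-a)]/sinh[p(b-a)]) f(b). -/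
open Real MeasureTheory

def HypPConvexOn (p : ℝ) (I : Set ℝ) (f : ℝ → ℝ) : Prop :=
  ∀ a ∈ I, ∀ b ∈ I, a < b → ∀ x ∈ Set.Icc a b,
    f x ≤ (Real.sinh (p * (b - x)) / Real.sinh (p * (b - a))) * f a +
          (Real.sinh (p * (x - a)) / Real.sinh (p * (b - a))) * f b

def HypPConcaveOn (p : ℝ) (I : Set ℝ) (f : ℝ → ℝ) : Prop :=
  ∀ a ∈ I, ∀ b ∈ I, a < b → ∀ x ∈ Set.Icc a b,
    f x ≥ (Real.sinh (p * (b - x)) / Real.sinh (p * (b - a))) * f a +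
          (Real.sinh (p * (x - a)) / Real.sinh (p * (b - a))) * f b

/-!
Substitute `s = exp (2 * p * x)` and put `G s = exp (p * x) * f x`. For `a ≤ x ≤ b`, the
sinh weights of the definition are `λ * exp (p * (a - x))` and `μ * exp (p * (b - x))`, where
`λ, μ` are the linear interpolation weights of `exp (2 * p * x)` between `exp (2 * p * a)` and
`exp (2 * p * b)`. Hence hyperbolic `p`-convexity of `f` is ordinary convexity of `G`, and the
chain rule gives `G'' s = (f'' x - p ^ 2 * f x) * exp (-3 * p * x) / (4 * p ^ 2) ≥ 0`.
The sign of `p` is irrelevant, since `sinh` is odd.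
-/

lemma hypPConvexOn_abs_iff {p : ℝ} {I : Set ℝ} {f : ℝ → ℝ} :
    HypPConvexOn |p| I f ↔ HypPConvexOn p I f := by
  rcases abs_choice p with h | h <;> rw [h]
  simp only [HypPConvexOn, neg_mul, sinh_neg, neg_div_neg_eq]

lemma sinh_mul_sub_eq (p y z : ℝ) :
    sinh (p * (z - y)) =
      (exp (p * z) ^ 2 - exp (p * y) ^ 2) / (2 * exp (p * y) * exp (p * z)) := by
  rw [sinh_eq, mul_sub, exp_sub, neg_sub, exp_sub]
  field_simp

noncomputable def logScale (p s : ℝ) : ℝ := log s / (2 * p)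

lemma exp_two_mul_logScale {p s : ℝ} (hp : p ≠ 0) (hs : 0 < s) :
    exp (2 * p * logScale p s) = s := by
  rw [logScale, mul_div_cancel₀ _ (by positivity), exp_log hs]

lemma logScale_exp_two_mul {p : ℝ} (hp : p ≠ 0) (x : ℝ) :
    logScale p (exp (2 * p * x)) = x := by
  rw [logScale, log_exp, mul_div_cancel_left₀ _ (by positivity)]

lemma logScale_mem_Ioo {p A B s : ℝ} (hp : 0 < p)
    (hs : s ∈ Set.Ioo (exp (2 * p * A)) (exp (2 * p * B))) : logScale p s ∈ Set.Ioo A B := by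
  have hs0 : 0 < s := (exp_pos _).trans hs.1
  rw [← exp_two_mul_logScale hp.ne' hs0, Set.mem_Ioo, exp_lt_exp, exp_lt_exp] at hs
  exact ⟨lt_of_mul_lt_mul_left hs.1 (by positivity), lt_of_mul_lt_mul_left hs.2 (by positivity)⟩

lemma HasDerivAt.comp_logScale {p s d : ℝ} {F : ℝ → ℝ} (hp : p ≠ 0) (hs : 0 < s)
    (hF : HasDerivAt F d (logScale p s)) :
    HasDerivAt (fun t => F (logScale p t))
      (d * Real.exp (-(2 * p * logScale p s)) / (2 * p)) s := by
  have hlog : HasDerivAt (logScale p) (s⁻¹ / (2 * p)) s := (hasDerivAt_log hs.ne').div_const _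
  refine (hF.comp s hlog).congr_deriv ?_
  rw [Real.exp_neg, exp_two_mul_logScale hp hs]
  ring

lemma hypPConvexOn_of_convexOn_comp_logScale {p : ℝ} (hp : 0 < p) {I S : Set ℝ}
    {f : ℝ → ℝ}
    (hconv : ConvexOn ℝ S (fun s => exp (p * logScale p s) * f (logScale p s)))
    (hIS : ∀ x ∈ I, exp (2 * p * x) ∈ S) :
    HypPConvexOn p I f := by
  intro a ha b hb hab x hx
  have hsq : ∀ y, exp (2 * p * y) = exp (p * y) ^ 2 := fun y => by
    rw [sq, ← exp_add]; ring_nf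
  have hmono : ∀ {y z}, y ≤ z → exp (2 * p * y) ≤ exp (2 * p * z) := fun h => by
    gcongr
  have hlt : exp (2 * p * a) < exp (2 * p * b) := by gcongr
  have hne : exp (2 * p * b) - exp (2 * p * a) ≠ 0 := (sub_pos.2 hlt).ne'
  have hwa := div_nonneg (sub_nonneg.2 (hmono hx.2)) (sub_nonneg.2 hlt.le)
  have hwb := div_nonneg (sub_nonneg.2 (hmono hx.1)) (sub_nonneg.2 hlt.le)
  have key := hconv.2 (hIS a ha) (hIS b hb) hwa hwb (by field_simp; ring)
  have hcomb :
      (exp (2 * p * b) - exp (2 * p * x)) / (exp (2 * p * b) - exp (2 * p * a)) * exp (2 * p * a)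
        + (exp (2 * p * x) - exp (2 * p * a)) / (exp (2 * p * b) - exp (2 * p * a))
          * exp (2 * p * b) = exp (2 * p * x) := by
    field_simp
    ring
  simp only [smul_eq_mul, hcomb, logScale_exp_two_mul hp.ne'] at key
  rw [sinh_mul_sub_eq, sinh_mul_sub_eq, sinh_mul_sub_eq]
  simp only [hsq] at key hlt
  have hu := exp_pos (p * a)
  have hv := exp_pos (p * x)
  have hw := exp_pos (p * b)
  generalize exp (p * a) = u at key hlt hu hv hw ⊢
  generalize exp (p * x) = v at key hlt hu hv hw ⊢
  generalize exp (p * b) = w at key hlt hu hv hw ⊢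
  have hd : w ^ 2 - u ^ 2 ≠ 0 := (sub_pos.2 hlt).ne'
  refine ((le_div_iff₀' hv).2 key).trans_eq ?_
  field_simp

lemma Convex.convexOn_of_hasDerivAt2_nonneg {D : Set ℝ} (hD : Convex ℝ D) (hDo : IsOpen D)
    {f f' f'' : ℝ → ℝ} (hf : ∀ x ∈ D, HasDerivAt f (f' x) x)
    (hf' : ∀ x ∈ D, HasDerivAt f' (f'' x) x) (hf''₀ : ∀ x ∈ D, 0 ≤ f'' x) :
    ConvexOn ℝ D f := by
  have hcont : ContinuousOn f D := fun x hx => (hf x hx).continuousAt.continuousWithinAt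
  rw [← hDo.interior_eq] at hf hf' hf''₀
  exact convexOn_of_hasDerivWithinAt2_nonneg hD hcont
    (fun x hx => (hf x hx).hasDerivWithinAt) (fun x hx => (hf' x hx).hasDerivWithinAt) hf''₀

lemma convexOn_comp_logScale {A B p : ℝ} (hp : 0 < p) {f f' f'' : ℝ → ℝ}
    (hf' : ∀ x ∈ Set.Ioo A B, HasDerivAt f (f' x) x)
    (hf'' : ∀ x ∈ Set.Ioo A B, HasDerivAt f' (f'' x) x)
    (hineq : ∀ x ∈ Set.Ioo A B, 0 ≤ f'' x - p ^ 2 * f x) :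
    ConvexOn ℝ (Set.Ioo (exp (2 * p * A)) (exp (2 * p * B)))
      (fun s => exp (p * logScale p s) * f (logScale p s)) := by
  have hexp : ∀ x, HasDerivAt (fun y => exp (p * y)) (exp (p * x) * p) x := fun x =>
    ((hasDerivAt_id x).const_mul p).exp.congr_deriv (by simp)
  have hexp_neg : ∀ x, HasDerivAt (fun y => exp (-(p * y))) (exp (-(p * x)) * -p) x := fun x =>
    ((hasDerivAt_id x).const_mul p).neg.exp.congr_deriv (by simp)
  let g : ℝ → ℝ := fun x => (f' x + p * f x) * exp (-(p * x)) / (2 * p)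
  have hF : ∀ x ∈ Set.Ioo A B, HasDerivAt (fun y => exp (p * y) * f y)
      (exp (p * x) * p * f x + exp (p * x) * f' x) x := fun x hx =>
    (hexp x).mul (hf' x hx)
  have hg : ∀ x ∈ Set.Ioo A B,
      HasDerivAt g ((f'' x - p ^ 2 * f x) * exp (-(p * x)) / (2 * p)) x := fun x hx =>
    ((((hf'' x hx).fun_add ((hf' x hx).const_mul p)).mul (hexp_neg x)).div_const _).congr_deriv
      (by ring)
  have hpos : ∀ s ∈ Set.Ioo (exp (2 * p * A)) (exp (2 * p * B)), 0 < s :=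
    fun s hs => (exp_pos _).trans hs.1
  have hG : ∀ s ∈ Set.Ioo (exp (2 * p * A)) (exp (2 * p * B)),
      HasDerivAt (fun s => exp (p * logScale p s) * f (logScale p s)) (g (logScale p s)) s :=
    fun s hs => ((hF _ (logScale_mem_Ioo hp hs)).comp_logScale hp.ne' (hpos s hs)).congr_deriv (by
      have hx : exp (p * logScale p s) * exp (-(2 * p * logScale p s))
          = exp (-(p * logScale p s)) := by
        rw [← Real.exp_add]; ring_nf
      linear_combination (p * f (logScale p s) + f' (logScale p s)) / (2 * p) * hx)
  have hg' : ∀ s ∈ Set.Ioo (exp (2 * p * A)) (exp (2 * p * B)),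
      HasDerivAt (fun s => g (logScale p s))
      ((f'' (logScale p s) - p ^ 2 * f (logScale p s)) * exp (-(p * logScale p s)) / (2 * p)
        * exp (-(2 * p * logScale p s)) / (2 * p)) s :=
    fun s hs => (hg _ (logScale_mem_Ioo hp hs)).comp_logScale hp.ne' (hpos s hs)
  refine (convex_Ioo _ _).convexOn_of_hasDerivAt2_nonneg isOpen_Ioo hG hg' fun s hs => ?_
  have := hineq _ (logScale_mem_Ioo hp hs)
  positivity

theorem second_order_implies_hyp_convex_general
    (A B p : ℝ) (hp : p ≠ 0) (f f' f'' : ℝ → ℝ)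
    (hf' : ∀ x ∈ Set.Ioo A B, HasDerivAt f (f' x) x)
    (hf'' : ∀ x ∈ Set.Ioo A B, HasDerivAt f' (f'' x) x)
    (hineq : ∀ x ∈ Set.Ioo A B, f'' x - p ^ 2 * f x ≥ 0) :
    HypPConvexOn p (Set.Ioo A B) f := by
  have hq : 0 < |p| := abs_pos.2 hp
  rw [← hypPConvexOn_abs_iff]
  have hconv := convexOn_comp_logScale hq hf' hf'' (by simpa only [sq_abs] using hineq)
  exact hypPConvexOn_of_convexOn_comp_logScale hq hconv
    fun x hx => ⟨by gcongr; exact hx.1, by gcongr; exact hx.2⟩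

theorem second_order_implies_hyp_convex
    (A B p : ℝ) (hp : p ≠ 0) (f f' f'' : ℝ → ℝ)
    (hf' : ∀ x ∈ Set.Ioo A B, HasDerivAt f (f' x) x)
    (hf'' : ∀ x ∈ Set.Ioo A B, HasDerivAt f' (f'' x) x)
    (hcont : ContinuousOn f'' (Set.Ioo A B))
    (hineq : ∀ x ∈ Set.Ioo A B, f'' x - p ^ 2 * f x ≥ 0) :
    HypPConvexOn p (Set.Ioo A B) f :=
  second_order_implies_hyp_convex_general A B p hp f f' f'' hf' hf'' hineq
end

section
/- If f : I → ℝ is hyperbolic p-convex on an open interval I and twice continuously differentiable, then f''(x) - p²f(x) ≥ 0 for all x ∈ I. -/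
open Real MeasureTheory

/-! Putting `a = x - h`, `b = x + h` in the definition of hyperbolic `p`-convexity gives
`2 cosh (p h) f x ≤ f (x + h) + f (x - h)`. Subtract `2 f x` and divide by `h²`: as `h → 0`
the symmetric second difference quotient of `f` tends to `f'' x` (L'Hôpital), while
`2 (cosh (p h) - 1) / h²` tends to `p²`, so `p² f x ≤ f'' x`. -/

open Filter Topology

theorem HasDerivAt.tendsto_symmetric_second_difference {f f' : ℝ → ℝ} {x f'' : ℝ}
    (hf : ∀ᶠ y in 𝓝 x, HasDerivAt f (f' y) y) (hf' : HasDerivAt f' f'' x) :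
    Tendsto (fun h ↦ (f (x + h) + f (x - h) - 2 * f x) / h ^ 2) (𝓝[≠] 0) (𝓝 f'') := by
  have hf_near : ∀ᶠ h in 𝓝 (0 : ℝ),
      HasDerivAt (fun h ↦ f (x + h) + f (x - h) - 2 * f x) (f' (x + h) - f' (x - h)) h := by
    have hplus := (continuous_const_add x).tendsto' 0 x (add_zero x)
    have hminus := (continuous_sub_left x).tendsto' 0 x (sub_zero x)
    filter_upwards [hplus.eventually hf, hminus.eventually hf] with h hp hm
    simpa [sub_eq_add_neg] using
      ((hp.comp_const_add x h).add (hm.comp_const_sub x h)).sub_const (2 * f x)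
  have hslope : Tendsto (fun h ↦ h⁻¹ * (f' (x + h) - f' (x - h))) (𝓝[≠] 0) (𝓝 (2 * f'')) := by
    have hd : HasDerivAt (fun h ↦ f' (x + h) - f' (x - h)) (2 * f'') 0 := by
      have hd' := (add_zero x ▸ hf').comp_const_add x 0 |>.fun_sub
        ((sub_zero x ▸ hf').comp_const_sub x 0)
      rwa [sub_neg_eq_add, ← two_mul] at hd'
    simpa using hasDerivAt_iff_tendsto_slope_zero.mp hd
  have hcont : ContinuousAt (fun h ↦ f (x + h) + f (x - h) - 2 * f x) 0 :=
    hf_near.self_of_nhds.continuousAt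
  refine HasDerivAt.lhopital_zero_nhdsNE (g' := fun h ↦ 2 * h)
    (eventually_nhdsWithin_of_eventually_nhds hf_near)
    (Eventually.of_forall fun h ↦ by simpa using hasDerivAt_pow 2 h)
    (eventually_nhdsWithin_of_forall fun h hh ↦ mul_ne_zero two_ne_zero hh) ?_ ?_ ?_
  · convert hcont.tendsto.mono_left nhdsWithin_le_nhds using 2
    simp only [add_zero, sub_zero]
    ring
  · simpa using ((continuous_pow 2).tendsto (0 : ℝ)).mono_left nhdsWithin_le_nhds
  · have hlim := hslope.div_const 2
    rw [mul_div_cancel_left₀ f'' two_ne_zero] at hlim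
    refine hlim.congr' (eventually_nhdsWithin_of_forall fun h hh ↦ ?_)
    field_simp

theorem HypPConvexOn.two_mul_cosh_mul_le {p : ℝ} {I : Set ℝ} {f : ℝ → ℝ}
    (hf : HypPConvexOn p I f) (hp : p ≠ 0) {x h : ℝ} (hh : h ≠ 0)
    (hl : x - h ∈ I) (hr : x + h ∈ I) :
    2 * cosh (p * h) * f x ≤ f (x + h) + f (x - h) := by
  wlog hpos : 0 < h generalizing h
  · have := this (neg_ne_zero.2 hh) (by rwa [sub_neg_eq_add]) (by rwa [← sub_eq_add_neg])
      (neg_pos.2 (hh.lt_of_le (not_lt.1 hpos)))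
    rwa [mul_neg, cosh_neg, sub_neg_eq_add, ← sub_eq_add_neg, add_comm (f (x - h))] at this
  have hsinh : sinh (p * h) ≠ 0 := by simpa [sinh_eq_zero] using mul_ne_zero hp hh
  have hcoef : sinh (p * h) / sinh (p * (x + h - (x - h))) = (2 * cosh (p * h))⁻¹ := by
    rw [show p * (x + h - (x - h)) = 2 * (p * h) by ring, sinh_two_mul]
    field_simp
  have key := hf (x - h) hl (x + h) hr (by linarith) x ⟨by linarith, by linarith⟩
  rw [add_sub_cancel_left, sub_sub_cancel, hcoef, ← mul_add, inv_mul_eq_div,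
    le_div_iff₀' (by positivity)] at key
  linarith

theorem tendsto_two_mul_cosh_mul_sub_one_div_sq (p : ℝ) :
    Tendsto (fun h ↦ 2 * (cosh (p * h) - 1) / h ^ 2) (𝓝[≠] 0) (𝓝 (p ^ 2)) := by
  have hcosh (y : ℝ) : HasDerivAt (fun y ↦ cosh (p * y)) (p * sinh (p * y)) y := by
    simpa [mul_comm] using ((hasDerivAt_id y).const_mul p).cosh
  have hsinh : HasDerivAt (fun y ↦ p * sinh (p * y)) (p ^ 2) 0 := by
    simpa [sq] using (((hasDerivAt_id (0 : ℝ)).const_mul p).sinh).const_mul p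
  convert HasDerivAt.tendsto_symmetric_second_difference (.of_forall hcosh) hsinh using 2 with h
  simp only [zero_add, zero_sub, mul_neg, cosh_neg, mul_zero, cosh_zero]
  ring

theorem HypPConvexOn.sq_mul_le_of_hasDerivAt {p : ℝ} {I : Set ℝ} {f f' : ℝ → ℝ} {x f'' : ℝ}
    (hf : HypPConvexOn p I f) (hp : p ≠ 0) (hI : I ∈ 𝓝 x)
    (hf' : ∀ᶠ y in 𝓝 x, HasDerivAt f (f' y) y) (hf'' : HasDerivAt f' f'' x) :
    p ^ 2 * f x ≤ f'' := by
  have hplus : ∀ᶠ h in 𝓝 (0 : ℝ), x + h ∈ I :=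
    ((continuous_const_add x).tendsto' 0 x (add_zero x)).eventually_mem hI
  have hminus : ∀ᶠ h in 𝓝 (0 : ℝ), x - h ∈ I :=
    ((continuous_sub_left x).tendsto' 0 x (sub_zero x)).eventually_mem hI
  refine le_of_tendsto_of_tendsto ((tendsto_two_mul_cosh_mul_sub_one_div_sq p).mul_const (f x))
    (HasDerivAt.tendsto_symmetric_second_difference hf' hf'') ?_
  filter_upwards [self_mem_nhdsWithin, nhdsWithin_le_nhds hplus, nhdsWithin_le_nhds hminus]
    with h hh hr hl
  rw [div_mul_eq_mul_div]
  gcongr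
  linarith [hf.two_mul_cosh_mul_le hp hh hl hr]

theorem hyp_convex_implies_second_order_general
    (A B p : ℝ) (hp : p ≠ 0) (f f' f'' : ℝ → ℝ)
    (hf' : ∀ x ∈ Set.Ioo A B, HasDerivAt f (f' x) x)
    (hf'' : ∀ x ∈ Set.Ioo A B, HasDerivAt f' (f'' x) x)
    (hconv : HypPConvexOn p (Set.Ioo A B) f) :
    ∀ x ∈ Set.Ioo A B, f'' x - p ^ 2 * f x ≥ 0 := by
  intro x hx
  have hI : Set.Ioo A B ∈ 𝓝 x := isOpen_Ioo.mem_nhds hx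
  have := hconv.sq_mul_le_of_hasDerivAt hp hI (eventually_of_mem hI hf') (hf'' x hx)
  linarith

theorem hyp_convex_implies_second_order
    (A B p : ℝ) (hp : p ≠ 0) (f f' f'' : ℝ → ℝ)
    (hf' : ∀ x ∈ Set.Ioo A B, HasDerivAt f (f' x) x)
    (hf'' : ∀ x ∈ Set.Ioo A B, HasDerivAt f' (f'' x) x)
    (hcont : ContinuousOn f'' (Set.Ioo A B))
    (hconv : HypPConvexOn p (Set.Ioo A B) f) :
    ∀ x ∈ Set.Ioo A B, f'' x - p ^ 2 * f x ≥ 0 :=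
  hyp_convex_implies_second_order_general A B p hp f f' f'' hf' hf'' hconv
end

section
/- For r ∈ (-∞,0) ∪ [1,∞) and p ≠ 0, the power function f_r(x) = x^r is hyperbolic p-convex on the interval (0, √(r(r-1))/|p|) and hyperbolic p-concave on (√(r(r-1))/|p|, ∞). -/
open Real MeasureTheory

/-!
The chord `hypChord p a b (f a) (f b)` solves `y'' = p² y`, so `g = f - hypChord p a b (f a) (f b)`
satisfies `g'' - p² g = f'' - p² f`. When `f'' ≥ p² f`, this forces `g'' > 0` wherever `g > 0`,
so `g` has no positive interior maximum; as `g` vanishes at `a` and `b`, it is `≤ 0` on `[a, b]`.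
For `f x = x ^ r` one has `f'' - p² f = x ^ (r - 2) * (r (r - 1) - p² x²)`, which is `≥ 0` below
`√(r (r - 1)) / |p|` and `≤ 0` above it.
-/

open Set Filter Topology

/-- The solution of `y'' = p² y` with `y a = u` and `y b = v`, against which hyperbolic
`p`-convexity compares a function (for `p = 0` or `a = b` it is `0`, since `x / 0 = 0`). -/
noncomputable def hypChord (p a b u v x : ℝ) : ℝ :=
  (sinh (p * (b - x)) / sinh (p * (b - a))) * u + (sinh (p * (x - a)) / sinh (p * (b - a))) * v

theorem hasDerivAt_mul_const_sub (p b x : ℝ) : HasDerivAt (fun x => p * (b - x)) (-p) x := by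
  simpa using ((hasDerivAt_id x).const_sub b).const_mul p

theorem hasDerivAt_mul_sub_const (p a x : ℝ) : HasDerivAt (fun x => p * (x - a)) p x := by
  simpa using ((hasDerivAt_id x).sub_const a).const_mul p

section HypChord

variable (p a b u v : ℝ)

theorem differentiable_hypChord : Differentiable ℝ (hypChord p a b u v) := by
  unfold hypChord
  fun_prop

theorem deriv_hypChord :
    deriv (hypChord p a b u v) = fun x =>
      cosh (p * (b - x)) * -p / sinh (p * (b - a)) * u +
        cosh (p * (x - a)) * p / sinh (p * (b - a)) * v := by
  funext x
  exact ((((hasDerivAt_mul_const_sub p b x).sinh.div_const _).mul_const u).add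
    (((hasDerivAt_mul_sub_const p a x).sinh.div_const _).mul_const v)).deriv

theorem differentiable_deriv_hypChord : Differentiable ℝ (deriv (hypChord p a b u v)) := by
  rw [deriv_hypChord]
  fun_prop

theorem deriv_deriv_hypChord (x : ℝ) :
    deriv (deriv (hypChord p a b u v)) x = p ^ 2 * hypChord p a b u v x := by
  rw [deriv_hypChord]
  refine (((((hasDerivAt_mul_const_sub p b x).cosh.mul_const (-p)).div_const _).mul_const u).add
    ((((hasDerivAt_mul_sub_const p a x).cosh.mul_const p).div_const _).mul_const v)).deriv.trans ?_
  rw [hypChord]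
  ring

end HypChord

section Endpoints

variable {p a b : ℝ}

theorem sinh_mul_sub_ne_zero (hp : p ≠ 0) (hab : a < b) : sinh (p * (b - a)) ≠ 0 := by
  rw [ne_eq, sinh_eq_zero]
  exact mul_ne_zero hp (sub_pos.2 hab).ne'

theorem hypChord_left (hp : p ≠ 0) (hab : a < b) (u v : ℝ) : hypChord p a b u v a = u := by
  simp [hypChord, sinh_mul_sub_ne_zero hp hab]

theorem hypChord_right (hp : p ≠ 0) (hab : a < b) (u v : ℝ) : hypChord p a b u v b = v := by
  simp [hypChord, sinh_mul_sub_ne_zero hp hab]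

end Endpoints

theorem nonpos_of_deriv_deriv_pos {h : ℝ → ℝ} {a b : ℝ} (hc : ContinuousOn h (Icc a b))
    (ha : h a ≤ 0) (hb : h b ≤ 0) (hpos : ∀ y ∈ Ioo a b, 0 < h y → 0 < deriv (deriv h) y) :
    ∀ x ∈ Icc a b, h x ≤ 0 := by
  by_contra! ⟨x, hx, hx0⟩
  obtain ⟨c, hc_mem, hmax⟩ := isCompact_Icc.exists_isMaxOn ⟨x, hx⟩ hc
  have hcpos : 0 < h c := hx0.trans_le (hmax hx)
  have hc_nhds : Icc a b ∈ 𝓝 c :=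
    Icc_mem_nhds (hc_mem.1.lt_of_ne (by rintro rfl; linarith))
      (hc_mem.2.lt_of_ne (by rintro rfl; linarith))
  have hc_Ioo : c ∈ Ioo a b := by rwa [← interior_Icc, mem_interior_iff_mem_nhds]
  have hloc_max : IsLocalMax h c := hmax.isLocalMax hc_nhds
  -- The second derivative test makes `c` a local minimum too, so `h` is locally constant at `c`.
  have hloc_min : IsLocalMin h c :=
    isLocalMin_of_deriv_deriv_pos (hpos c hc_Ioo hcpos) hloc_max.deriv_eq_zero
      (hc.continuousAt hc_nhds)
  have hconst : h =ᶠ[𝓝 c] fun _ => h c :=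
    (hloc_min.and hloc_max).mono fun y hy => le_antisymm hy.2 hy.1
  have hderiv : deriv h =ᶠ[𝓝 c] fun _ => 0 := by
    simpa using hconst.deriv
  have := hpos c hc_Ioo hcpos
  rw [hderiv.deriv_eq, deriv_const] at this
  exact this.false

theorem le_hypChord_of_sq_mul_le_deriv_deriv {p a b : ℝ} {f : ℝ → ℝ} (hp : p ≠ 0) (hab : a < b)
    (hc : ContinuousOn f (Icc a b)) (hf : ContDiffOn ℝ 2 f (Ioo a b))
    (hf'' : ∀ y ∈ Ioo a b, p ^ 2 * f y ≤ deriv (deriv f) y) :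
    ∀ x ∈ Icc a b, f x ≤ hypChord p a b (f a) (f b) x := by
  set C := hypChord p a b (f a) (f b)
  obtain ⟨hf_diff, -, hf'_cont⟩ := (contDiffOn_succ_iff_deriv_of_isOpen (n := 1) isOpen_Ioo).1 hf
  have hC'' : ∀ y ∈ Ioo a b,
      deriv (deriv fun x => f x - C x) y = deriv (deriv f) y - p ^ 2 * C y := by
    intro y hy
    have hC' : deriv (fun x => f x - C x) =ᶠ[𝓝 y] fun x => deriv f x - deriv C x := by
      filter_upwards [isOpen_Ioo.mem_nhds hy] with z hz
      exact deriv_sub (hf_diff.differentiableAt (isOpen_Ioo.mem_nhds hz))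
        (differentiable_hypChord p a b _ _ z)
    rw [hC'.deriv_eq, deriv_fun_sub ((hf'_cont.differentiableOn one_ne_zero).differentiableAt
      (isOpen_Ioo.mem_nhds hy)) (differentiable_deriv_hypChord p a b _ _ y),
      deriv_deriv_hypChord]
  intro x hx
  have := nonpos_of_deriv_deriv_pos (h := fun x => f x - C x)
    (hc.sub (differentiable_hypChord p a b _ _).continuous.continuousOn)
    (by simp [C, hypChord_left hp hab]) (by simp [C, hypChord_right hp hab])
    (fun y hy hpos => by
      rw [hC'' y hy]
      nlinarith [hf'' y hy, mul_pos (pow_two_pos_of_ne_zero hp) hpos]) x hx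
  linarith

theorem hypPConvexOn_of_sq_mul_le_deriv_deriv {p : ℝ} {I : Set ℝ} {f : ℝ → ℝ} (hp : p ≠ 0)
    (hI : I.OrdConnected) (hc : ContinuousOn f I) (hf : ContDiffOn ℝ 2 f (interior I))
    (hf'' : ∀ y ∈ interior I, p ^ 2 * f y ≤ deriv (deriv f) y) : HypPConvexOn p I f := by
  intro a ha b hb hab
  have hIcc : Icc a b ⊆ I := hI.out ha hb
  have hIoo : Ioo a b ⊆ interior I := interior_maximal (Ioo_subset_Icc_self.trans hIcc) isOpen_Ioo
  exact le_hypChord_of_sq_mul_le_deriv_deriv hp hab (hc.mono hIcc) (hf.mono hIoo)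
    fun y hy => hf'' y (hIoo hy)

theorem hypPConcaveOn_of_deriv_deriv_le_sq_mul {p : ℝ} {I : Set ℝ} {f : ℝ → ℝ} (hp : p ≠ 0)
    (hI : I.OrdConnected) (hc : ContinuousOn f I) (hf : ContDiffOn ℝ 2 f (interior I))
    (hf'' : ∀ y ∈ interior I, deriv (deriv f) y ≤ p ^ 2 * f y) : HypPConcaveOn p I f := by
  intro a ha b hb hab x hx
  have := hypPConvexOn_of_sq_mul_le_deriv_deriv (f := -f) hp hI hc.neg hf.neg
    (fun y hy => by simp only [deriv.neg', deriv.fun_neg, Pi.neg_apply]; linarith [hf'' y hy])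
    a ha b hb hab x hx
  simp only [Pi.neg_apply] at this
  linarith

theorem deriv_deriv_rpow_const (r x : ℝ) :
    deriv (deriv fun x : ℝ => x ^ r) x = r * (r - 1) * x ^ (r - 2) := by
  rw [deriv_rpow_const', deriv_const_mul_field', Real.deriv_rpow_const']
  ring_nf

theorem contDiffOn_rpow_const_Ioi (r : ℝ) : ContDiffOn ℝ 2 (fun x : ℝ => x ^ r) (Ioi 0) :=
  fun _ hx => (contDiffAt_rpow_const_of_ne (ne_of_gt hx)).contDiffWithinAt

theorem sq_mul_rpow_sub_deriv_deriv_rpow_const {x : ℝ} (hx : 0 < x) (p r : ℝ) :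
    p ^ 2 * x ^ r - deriv (deriv fun x : ℝ => x ^ r) x =
      x ^ (r - 2) * (p ^ 2 * x ^ 2 - r * (r - 1)) := by
  rw [deriv_deriv_rpow_const, show x ^ r = x ^ (r - 2) * x ^ 2 by
    rw [← rpow_two, ← rpow_add hx, sub_add_cancel]]
  ring

section Rpow

variable {p r : ℝ} {I : Set ℝ}

theorem hypPConvexOn_rpow_const (hp : p ≠ 0) (hI : I.OrdConnected) (hI0 : I ⊆ Ioi 0)
    (h : ∀ y ∈ I, p ^ 2 * y ^ 2 ≤ r * (r - 1)) : HypPConvexOn p I fun x => x ^ r := by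
  refine hypPConvexOn_of_sq_mul_le_deriv_deriv hp hI
    ((contDiffOn_rpow_const_Ioi r).continuousOn.mono hI0)
    ((contDiffOn_rpow_const_Ioi r).mono (interior_subset.trans hI0)) fun y hy => ?_
  have hy0 : 0 < y := hI0 (interior_subset hy)
  rw [← sub_nonpos, sq_mul_rpow_sub_deriv_deriv_rpow_const hy0]
  exact mul_nonpos_of_nonneg_of_nonpos (rpow_nonneg hy0.le _)
    (sub_nonpos.2 (h y (interior_subset hy)))

theorem hypPConcaveOn_rpow_const (hp : p ≠ 0) (hI : I.OrdConnected) (hI0 : I ⊆ Ioi 0)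
    (h : ∀ y ∈ I, r * (r - 1) ≤ p ^ 2 * y ^ 2) : HypPConcaveOn p I fun x => x ^ r := by
  refine hypPConcaveOn_of_deriv_deriv_le_sq_mul hp hI
    ((contDiffOn_rpow_const_Ioi r).continuousOn.mono hI0)
    ((contDiffOn_rpow_const_Ioi r).mono (interior_subset.trans hI0)) fun y hy => ?_
  have hy0 : 0 < y := hI0 (interior_subset hy)
  rw [← sub_nonneg, sq_mul_rpow_sub_deriv_deriv_rpow_const hy0]
  exact mul_nonneg (rpow_nonneg hy0.le _) (sub_nonneg.2 (h y (interior_subset hy)))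

end Rpow

theorem power_hyp_convex_concave_general
    (r p : ℝ) (hp : p ≠ 0) :
    HypPConvexOn p (Set.Ioo 0 (Real.sqrt (r * (r - 1)) / |p|)) (fun x => x ^ r) ∧
      HypPConcaveOn p (Set.Ioi (Real.sqrt (r * (r - 1)) / |p|)) (fun x => x ^ r) := by
  have hp' : 0 < |p| := abs_pos.2 hp
  have hsq : ∀ y : ℝ, p ^ 2 * y ^ 2 = (y * |p|) ^ 2 := fun y => by rw [mul_pow, sq_abs, mul_comm]
  refine ⟨hypPConvexOn_rpow_const hp ordConnected_Ioo Ioo_subset_Ioi_self fun y hy => ?_,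
    hypPConcaveOn_rpow_const hp ordConnected_Ioi (Ioi_subset_Ioi (by positivity)) fun y hy => ?_⟩
  · rw [hsq]
    exact ((lt_sqrt (mul_nonneg hy.1.le hp'.le)).1 ((lt_div_iff₀ hp').1 hy.2)).le
  · have hy0 : 0 < y := lt_of_le_of_lt (by positivity) hy
    rw [hsq]
    exact ((sqrt_lt' (by positivity)).1 ((div_lt_iff₀ hp').1 hy)).le

theorem power_hyp_convex_concave
    (r p : ℝ) (hr : r < 0 ∨ 1 ≤ r) (hp : p ≠ 0) :
    HypPConvexOn p (Set.Ioo 0 (Real.sqrt (r * (r - 1)) / |p|)) (fun x => x ^ r) ∧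
      HypPConcaveOn p (Set.Ioi (Real.sqrt (r * (r - 1)) / |p|)) (fun x => x ^ r) :=
  power_hyp_convex_concave_general r p hp
end

section
/- Let u : I → ℝ be hyperbolic p-convex and w : I → ℝ positive, integrable and symmetric about (a+b)/2 on [a,b] ⊂ I. Then ∫_a^b u(x)w(x) dx ≤ ((u(a)+u(b))/2)(cosh(p(b-a)/2))^{-1} ∫_a^b cosh[p(x-(a+b)/2)] w(x) dx + ((u(a)-u(b))/2)(sinh(p(b-a)/2))^{-1} ∫_a^b sinh[p(x-(a+b)/2)] w(x) dx. -/
open Real MeasureTheory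

/-! A hyperbolic `p`-convex `u` lies below the hyperbolic chord, which, written around the midpoint
`m = (a + b) / 2`, is `A cosh (p (x - m)) + B sinh (p (x - m))`. Integrating against the symmetric
weight `w`, the `sinh` term integrates to zero because it is odd about `m`, so both sides of the
inequality reduce to `A ∫ cosh (p (x - m)) w`. The only analytic work is to see that `u w` is
integrable: `u` is bounded above by the chord, and bounded below because the midpoint inequality
`2 cosh (p (y - x) / 2) u ((x + y) / 2) ≤ u x + u y` ties `u x` to `u m` and `u (a + b - x)`. -/

open Set

theorem intervalIntegral.integral_eq_zero_of_forall_add_sub_eq_neg {f : ℝ → ℝ} {a b : ℝ}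
    (hf : ∀ x ∈ uIcc a b, f (a + b - x) = -f x) : ∫ x in a..b, f x = 0 := by
  have hreflect : ∫ x in a..b, f (a + b - x) = ∫ x in a..b, f x := by
    simp [intervalIntegral.integral_comp_sub_left f (a + b) (a := a) (b := b)]
  rw [intervalIntegral.integral_congr hf, intervalIntegral.integral_neg] at hreflect
  linarith

namespace HypPConvexOn

variable {p : ℝ} {I : Set ℝ} {u : ℝ → ℝ} {a b : ℝ}

theorem le_cosh_sinh (hu : HypPConvexOn p I u) (hp : p ≠ 0) (ha : a ∈ I) (hb : b ∈ I)
    (hab : a < b) {x : ℝ} (hx : x ∈ Icc a b) :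
    u x ≤ (u a + u b) / 2 / cosh (p * (b - a) / 2) * cosh (p * (x - (a + b) / 2)) +
      (u b - u a) / 2 / sinh (p * (b - a) / 2) * sinh (p * (x - (a + b) / 2)) := by
  set s := p * (b - a) / 2
  set t := p * (x - (a + b) / 2)
  have hs : sinh s ≠ 0 := sinh_ne_zero.2 (by simp [s, hp, sub_ne_zero.2 hab.ne'])
  have hchord := hu a ha b hb hab x hx
  rw [show p * (b - x) = s - t by ring, show p * (x - a) = s + t by ring,
    show p * (b - a) = 2 * s by ring, sinh_two_mul, sinh_sub, sinh_add] at hchord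
  refine hchord.trans_eq ?_
  field_simp [hs, (cosh_pos s).ne']
  ring

theorem two_mul_cosh_mul_le_s11 (hu : HypPConvexOn p I u) (hp : p ≠ 0) {x y : ℝ} (hx : x ∈ I)
    (hy : y ∈ I) : 2 * cosh (p * (y - x) / 2) * u ((x + y) / 2) ≤ u x + u y := by
  wlog hxy : x ≤ y generalizing x y
  · rw [show p * (y - x) / 2 = -(p * (x - y) / 2) by ring, cosh_neg, add_comm x, add_comm (u x)]
    exact this hy hx (le_of_not_ge hxy)
  rcases hxy.eq_or_lt with rfl | hlt
  · simp only [sub_self, mul_zero, zero_div, cosh_zero, add_self_div_two]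
    linarith
  have hmid := hu.le_cosh_sinh hp hx hy hlt (x := (x + y) / 2) ⟨by linarith, by linarith⟩
  rw [sub_self, mul_zero, cosh_zero, sinh_zero, mul_zero, add_zero, mul_one,
    le_div_iff₀ (cosh_pos _)] at hmid
  linarith

theorem exists_forall_le (hu : HypPConvexOn p I u) (hp : p ≠ 0) (ha : a ∈ I) (hb : b ∈ I)
    (hab : a < b) : ∃ M, ∀ x ∈ Icc a b, u x ≤ M := by
  obtain ⟨M, hM⟩ := (isCompact_Icc (a := a) (b := b)).exists_bound_of_continuousOn
    (f := fun x => (u a + u b) / 2 / cosh (p * (b - a) / 2) * cosh (p * (x - (a + b) / 2)) +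
      (u b - u a) / 2 / sinh (p * (b - a) / 2) * sinh (p * (x - (a + b) / 2)))
    (by fun_prop)
  exact ⟨M, fun x hx =>
    (hu.le_cosh_sinh hp ha hb hab hx).trans ((le_abs_self _).trans (hM x hx))⟩

theorem exists_abs_le (hu : HypPConvexOn p I u) (hp : p ≠ 0) (hab : a < b)
    (hI : Icc a b ⊆ I) : ∃ K, ∀ x ∈ Icc a b, |u x| ≤ K := by
  obtain ⟨M, hle_M⟩ := hu.exists_forall_le hp (hI (left_mem_Icc.2 hab.le))
    (hI (right_mem_Icc.2 hab.le)) hab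
  set C := cosh (p * (b - a) / 2)
  refine ⟨2 * C * |u ((a + b) / 2)| + M, fun x hx => abs_le.2 ⟨?_, ?_⟩⟩
  · have hx' : a + b - x ∈ Icc a b := ⟨by linarith [hx.2], by linarith [hx.1]⟩
    have hmid := hu.two_mul_cosh_mul_le_s11 hp (hI hx) (hI hx')
    rw [show (x + (a + b - x)) / 2 = (a + b) / 2 by ring] at hmid
    have hcosh_le : cosh (p * (a + b - x - x) / 2) ≤ C := by
      rw [cosh_le_cosh, abs_div, abs_div, abs_mul, abs_mul]
      gcongr |p| * ?_ / _
      rw [abs_of_pos (sub_pos.2 hab), abs_le]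
      constructor <;> linarith [hx.1, hx.2]
    have hcosh_mul : -(2 * C * |u ((a + b) / 2)|) ≤
        2 * cosh (p * (a + b - x - x) / 2) * u ((a + b) / 2) := by
      nlinarith [neg_abs_le (u ((a + b) / 2)), abs_nonneg (u ((a + b) / 2)),
        cosh_pos (p * (a + b - x - x) / 2)]
    linarith [hle_M _ hx']
  · exact (hle_M x hx).trans (le_add_of_nonneg_left (by positivity))

theorem intervalIntegrable_mul (hu : HypPConvexOn p I u) (hp : p ≠ 0) (hab : a < b)
    (hI : Icc a b ⊆ I) (hum : AEStronglyMeasurable u (volume.restrict (Ioc a b))) {w : ℝ → ℝ}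
    (hw : IntervalIntegrable w volume a b) :
    IntervalIntegrable (fun x => u x * w x) volume a b := by
  obtain ⟨K, hK⟩ := hu.exists_abs_le hp hab hI
  rw [intervalIntegrable_iff_integrableOn_Ioc_of_le hab.le] at hw ⊢
  exact hw.bdd_mul hum <| ae_restrict_of_forall_mem measurableSet_Ioc fun x hx =>
    hK x (Ioc_subset_Icc_self hx)

end HypPConvexOn

theorem dragomir_fejer_upper_general
    (I : Set ℝ) (p : ℝ) (hp : 0 < p) (u w : ℝ → ℝ)
    (hconv : HypPConvexOn p I u)
    (a b : ℝ) (hab : a < b) (hIab : Set.Icc a b ⊆ I)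
    (hu : IntervalIntegrable u volume a b)
    (hw : IntervalIntegrable w volume a b)
    (hwpos : ∀ x ∈ Set.Icc a b, 0 < w x)
    (hwsym : ∀ x ∈ Set.Icc a b, w (a + b - x) = w x) :
    (∫ x in a..b, u x * w x) ≤
      ((u a + u b) / 2) * (Real.cosh (p * (b - a) / 2))⁻¹ *
          (∫ x in a..b, Real.cosh (p * (x - (a + b) / 2)) * w x) +
        ((u a - u b) / 2) * (Real.sinh (p * (b - a) / 2))⁻¹ *
          ∫ x in a..b, Real.sinh (p * (x - (a + b) / 2)) * w x := by
  have ha := hIab (left_mem_Icc.2 hab.le)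
  have hb := hIab (right_mem_Icc.2 hab.le)
  set m := (a + b) / 2
  have hcosh_w : IntervalIntegrable (fun x => cosh (p * (x - m)) * w x) volume a b :=
    hw.continuousOn_mul (by fun_prop)
  have hsinh_w : IntervalIntegrable (fun x => sinh (p * (x - m)) * w x) volume a b :=
    hw.continuousOn_mul (by fun_prop)
  have hsinh_zero : ∫ x in a..b, sinh (p * (x - m)) * w x = 0 := by
    refine intervalIntegral.integral_eq_zero_of_forall_add_sub_eq_neg fun x hx => ?_
    rw [uIcc_of_le hab.le] at hx
    rw [hwsym x hx, show p * (a + b - x - m) = -(p * (x - m)) by ring, sinh_neg, neg_mul]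
  calc ∫ x in a..b, u x * w x
      ≤ ∫ x in a..b, ((u a + u b) / 2 / cosh (p * (b - a) / 2) * (cosh (p * (x - m)) * w x) +
          (u b - u a) / 2 / sinh (p * (b - a) / 2) * (sinh (p * (x - m)) * w x)) := by
        refine intervalIntegral.integral_mono_on hab.le
          (hconv.intervalIntegrable_mul hp.ne' hab hIab hu.1.aestronglyMeasurable hw)
          ((hcosh_w.const_mul _).add (hsinh_w.const_mul _)) fun x hx => ?_
        rw [← mul_assoc, ← mul_assoc, ← add_mul]
        exact mul_le_mul_of_nonneg_right (hconv.le_cosh_sinh hp.ne' ha hb hab hx) (hwpos x hx).le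
    _ = _ := by
        rw [intervalIntegral.integral_add (hcosh_w.const_mul _) (hsinh_w.const_mul _),
          intervalIntegral.integral_const_mul, intervalIntegral.integral_const_mul, hsinh_zero]
        ring

theorem dragomir_fejer_upper
    (I : Set ℝ) (p : ℝ) (hp : 0 < p) (u w : ℝ → ℝ)
    (hconv : HypPConvexOn p I u)
    (a b : ℝ) (ha : a ∈ I) (hb : b ∈ I) (hab : a < b) (hIab : Set.Icc a b ⊆ I)
    (hu : IntervalIntegrable u volume a b)
    (hw : IntervalIntegrable w volume a b)
    (hwpos : ∀ x ∈ Set.Icc a b, 0 < w x)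
    (hwsym : ∀ x ∈ Set.Icc a b, w (a + b - x) = w x) :
    (∫ x in a..b, u x * w x) ≤
      ((u a + u b) / 2) * (Real.cosh (p * (b - a) / 2))⁻¹ *
          (∫ x in a..b, Real.cosh (p * (x - (a + b) / 2)) * w x) +
        ((u a - u b) / 2) * (Real.sinh (p * (b - a) / 2))⁻¹ *
          ∫ x in a..b, Real.sinh (p * (x - (a + b) / 2)) * w x :=
  dragomir_fejer_upper_general I p hp u w hconv a b hab hIab hu hw hwpos hwsym
end
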